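/- arXiv:2203.05933 — 2 statements merged into one kernel-verified Lean document; each statement's English description precedes it below -/
import Mathlib

section
/- The Koornwinder polynomials K_{nm}(ξ,η) = γ_{nm} P_{n−m}^{(0,2m+1)}(1−2η) P_m^{(0,0)}(2ξ/(1−η) − 1)(1−η)^m, for 0 ≤ m ≤ n, form an orthogonal family on the standard simplex T̂₀: ∫_{T̂₀} K_{nm}(ξ,η) K_{n'm'}(ξ,η) dξ dη = 0 whenever (n,m) ≠ (n',m'). -/
open MeasureTheory Set

/-- The standard 2-simplex `T̂₀ = {(ξ,η) : ξ ≥ 0, η ≥ 0, ξ + η ≤ 1}`. -/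
def stdSimplex2 : Set (ℝ × ℝ) := {p | 0 ≤ p.1 ∧ 0 ≤ p.2 ∧ p.1 + p.2 ≤ 1}

/-- The Jacobi polynomial `P_n^{(a,b)}` (explicit hypergeometric sum formula). -/
noncomputable def jacobiP (n a b : ℕ) (x : ℝ) : ℝ :=
  ∑ s ∈ Finset.range (n + 1),
    (Nat.choose (n + a) (n - s) : ℝ) * (Nat.choose (n + b) s : ℝ) *
      ((x - 1) / 2) ^ s * ((x + 1) / 2) ^ (n - s)

/-- The Koornwinder function
`K_{nm}(ξ,η) = γ P_{n−m}^{(0,2m+1)}(1−2η) P_m^{(0,0)}(2ξ/(1−η) − 1)(1−η)^m`. -/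
noncomputable def koornwinder (γ : ℝ) (n m : ℕ) (ξ η : ℝ) : ℝ :=
  γ * jacobiP (n - m) 0 (2 * m + 1) (1 - 2 * η) *
    jacobiP m 0 0 (2 * ξ / (1 - η) - 1) * (1 - η) ^ m


/-! In the collapsed coordinates `ξ = (1 - η) t` the simplex becomes the unit square with Jacobian
`1 - η`, and `(1 - η)^m P_m(2ξ/(1-η) - 1)` is a polynomial, homogeneous of degree `m` in
`(ξ, 1 - η)`, which becomes `(1 - η)^m P_m(2t - 1)`, where `P_m = P_m^{(0,0)}`. Hence
`∫_{T̂₀} K_{nm} K_{n'm'}` is `γ γ'` times the product of the Legendre integral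
`∫₀¹ P_m(2t-1) P_{m'}(2t-1) dt` and of
`∫₀¹ P_{n-m}^{(0,2m+1)}(1-2η) P_{n'-m'}^{(0,2m'+1)}(1-2η) (1-η)^{m+m'+1} dη`.
If `m ≠ m'` the first factor vanishes; if `m = m'` then `n ≠ n'` and the second one is a Jacobi
orthogonality integral for the weight `(1 - η)^{2m+1}`.

Jacobi orthogonality on `[0, 1]` in turn comes from expanding `P_k^{(a,b)}(1 - 2η)` in the basis
`η^s (1 - η)^{k-s}`: integrating termwise against `η^j η^a (1 - η)^b` with Beta integrals leaves a
multiple of the `k`-th forward difference of `s ↦ C(s + a + j, j)`, a polynomial of degree `j < k`.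
-/

section JacobiOrthogonality

open Finset Polynomial fwdDiff Nat

theorem fwdDiff_iter_choose_eq_zero {j k : ℕ} (h : j < k) :
    Δ_[1] ^[k] (fun x ↦ x.choose j : ℕ → ℤ) = 0 := by
  obtain ⟨i, rfl⟩ : ∃ i, k = i + 1 + j := ⟨k - (j + 1), by omega⟩
  have hj := fwdDiff_iter_choose 0 j
  rw [add_zero] at hj
  rw [Function.iterate_add_apply, hj, Function.iterate_succ_apply]
  simp only [Nat.choose_zero_right, Nat.cast_one, fwdDiff_const]
  exact Function.iterate_fixed (fwdDiff_const 1 0) i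

theorem alternating_sum_range_choose_mul_choose_add_eq_zero {R : Type*} [CommRing R]
    {j k : ℕ} (c : ℕ) (h : j < k) :
    ∑ s ∈ range (k + 1), (-1 : R) ^ s * k.choose s * (s + c).choose j = 0 := by
  have hdiff := fwdDiff_iter_eq_sum_shift 1 (fun x : ℕ ↦ ((x + c).choose j : ℤ)) k 0
  rw [fwdDiff_iter_comp_add 1 (fun x : ℕ ↦ (x.choose j : ℤ)), fwdDiff_iter_choose_eq_zero h]
    at hdiff
  simp only [smul_eq_mul, zero_add, mul_one, Pi.zero_apply] at hdiff
  have hℤ : ∑ s ∈ range (k + 1), (-1 : ℤ) ^ s * k.choose s * (s + c).choose j = 0 := by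
    rw [← mul_right_inj' (pow_ne_zero k (neg_ne_zero.mpr one_ne_zero)), mul_sum, mul_zero, hdiff]
    refine sum_congr rfl fun s hs ↦ ?_
    rw [← pow_sub_mul_pow (-1 : ℤ) (Nat.le_of_lt_succ (mem_range.mp hs))]
    ring_nf
    simp
  simpa using congrArg (Int.cast : ℤ → R) hℤ

theorem integral_pow_mul_one_sub_pow_succ (a b : ℕ) :
    ∫ x in (0:ℝ)..1, x ^ a * (1 - x) ^ (b + 1) =
      (b + 1) / (a + 1) * ∫ x in (0:ℝ)..1, x ^ (a + 1) * (1 - x) ^ b := by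
  have hu : ∀ x ∈ uIcc (0:ℝ) 1,
      HasDerivAt (fun x : ℝ ↦ (1 - x) ^ (b + 1)) (-((b + 1) * (1 - x) ^ b)) x := fun x _ ↦ by
    simpa using ((hasDerivAt_id x).const_sub 1).fun_pow (b + 1)
  have hv : ∀ x ∈ uIcc (0:ℝ) 1,
      HasDerivAt (fun x : ℝ ↦ x ^ (a + 1) / (a + 1)) (x ^ a) x := fun x _ ↦ by
    refine ((hasDerivAt_pow (a + 1) x).div_const _).congr_deriv ?_
    rw [Nat.add_sub_cancel]
    push_cast
    field_simp
  have hparts := intervalIntegral.integral_mul_deriv_eq_deriv_mul hu hv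
    (by apply Continuous.intervalIntegrable; fun_prop)
    (by apply Continuous.intervalIntegrable; fun_prop)
  simp only [mul_comm (_ ^ a), hparts, ← intervalIntegral.integral_const_mul]
  rw [sub_self, zero_pow (succ_ne_zero b), zero_pow (succ_ne_zero a)]
  simp only [zero_mul, zero_div, mul_zero, sub_zero, zero_sub, ← intervalIntegral.integral_neg]
  congr 1 with x
  ring

theorem integral_pow_mul_one_sub_pow (a b : ℕ) :
    ∫ x in (0:ℝ)..1, x ^ a * (1 - x) ^ b = a ! * b ! / (a + b + 1)! := by
  induction b generalizing a with
  | zero =>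
    simp only [pow_zero, mul_one, integral_pow, one_pow, zero_pow (succ_ne_zero a), sub_zero,
      factorial_zero, add_zero, factorial_succ]
    push_cast
    field_simp
  | succ b ih =>
    rw [integral_pow_mul_one_sub_pow_succ, ih (a + 1),
      show a + 1 + b + 1 = a + (b + 1) + 1 by ring, Nat.factorial_succ a, Nat.factorial_succ b]
    push_cast
    field_simp

theorem choose_mul_choose_mul_factorial_mul_factorial {a b j k s : ℕ} (hs : s ≤ k) :
    ((k + a).choose (k - s) * (k + b).choose s * ((j + a + s)! * (k - s + b)!) : ℝ) =
      (k + a)! * (k + b)! * j ! / k ! * (k.choose s * (s + (a + j)).choose j) := by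
  obtain ⟨t, rfl⟩ := Nat.exists_eq_add_of_le hs
  rw [Nat.add_sub_cancel_left, Nat.cast_choose ℝ (by omega : t ≤ s + t + a),
    Nat.cast_choose ℝ (by omega : s ≤ s + t + b), Nat.cast_choose ℝ (by omega : s ≤ s + t),
    Nat.cast_choose ℝ (by omega : j ≤ s + (a + j)),
    show s + t + a - t = a + s by omega, show s + t + b - s = t + b by omega,
    show s + t - s = t by omega, show s + (a + j) - j = a + s by omega,
    show s + (a + j) = j + a + s by omega]
  field_simp

@[fun_prop]
theorem continuous_jacobiP (n a b : ℕ) : Continuous (jacobiP n a b) := by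
  unfold jacobiP
  fun_prop

theorem jacobiP_one_sub_two_mul (n a b : ℕ) (η : ℝ) :
    jacobiP n a b (1 - 2 * η) = ∑ s ∈ range (n + 1),
      (n + a).choose (n - s) * (n + b).choose s * ((-η) ^ s * (1 - η) ^ (n - s)) := by
  unfold jacobiP
  refine sum_congr rfl fun s _ ↦ ?_
  ring

theorem integral_pow_mul_jacobiP_mul_eq_zero (a b : ℕ) {j k : ℕ} (h : j < k) :
    ∫ η in (0:ℝ)..1, η ^ j * jacobiP k a b (1 - 2 * η) * (η ^ a * (1 - η) ^ b) = 0 := by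
  have hexpand : ∀ η : ℝ, η ^ j * jacobiP k a b (1 - 2 * η) * (η ^ a * (1 - η) ^ b) =
      ∑ s ∈ range (k + 1), (k + a).choose (k - s) * (k + b).choose s * (-1) ^ s *
        (η ^ (j + a + s) * (1 - η) ^ (k - s + b)) := fun η ↦ by
    rw [jacobiP_one_sub_two_mul, mul_sum, sum_mul]
    refine sum_congr rfl fun s _ ↦ ?_
    rw [neg_pow]
    ring
  have hterm : ∀ s ∈ range (k + 1),
      (k + a).choose (k - s) * (k + b).choose s * (-1) ^ s *
        ((j + a + s)! * (k - s + b)! / (j + a + s + (k - s + b) + 1)! : ℝ) =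
      (k + a)! * (k + b)! * j ! / k ! / (j + a + k + b + 1)! *
        ((-1) ^ s * k.choose s * (s + (a + j)).choose j) := fun s hs ↦ by
    have hsk := Nat.le_of_lt_succ (mem_range.mp hs)
    rw [show j + a + s + (k - s + b) + 1 = j + a + k + b + 1 by omega]
    linear_combination (-1 : ℝ) ^ s / (j + a + k + b + 1)! *
      choose_mul_choose_mul_factorial_mul_factorial (a := a) (b := b) (j := j) hsk
  simp_rw [hexpand]
  rw [intervalIntegral.integral_finsetSum fun s _ ↦ by
    apply Continuous.intervalIntegrable; fun_prop]
  simp_rw [intervalIntegral.integral_const_mul, integral_pow_mul_one_sub_pow]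
  rw [sum_congr rfl hterm, ← mul_sum, alternating_sum_range_choose_mul_choose_add_eq_zero _ h,
    mul_zero]

theorem exists_natDegree_le_eval_eq_jacobiP (n a b : ℕ) :
    ∃ p : ℝ[X], p.natDegree ≤ n ∧ ∀ η, p.eval η = jacobiP n a b (1 - 2 * η) := by
  refine ⟨∑ s ∈ range (n + 1), C ((n + a).choose (n - s) * (n + b).choose s : ℝ) *
    ((-X) ^ s * (1 - X) ^ (n - s)), natDegree_sum_le_of_forall_le _ _ fun s hs ↦ ?_,
    fun η ↦ ?_⟩
  · have := Nat.le_of_lt_succ (mem_range.mp hs)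
    compute_degree
    omega
  · simp [jacobiP_one_sub_two_mul, eval_finsetSum]

theorem integral_eval_mul_jacobiP_mul_eq_zero (a b : ℕ) {p : ℝ[X]} {k : ℕ}
    (hp : p.natDegree < k) :
    ∫ η in (0:ℝ)..1, p.eval η * jacobiP k a b (1 - 2 * η) * (η ^ a * (1 - η) ^ b) = 0 := by
  simp_rw [eval_eq_sum_range' hp, sum_mul]
  rw [intervalIntegral.integral_finsetSum fun i _ ↦ by
    apply Continuous.intervalIntegrable; fun_prop]
  refine sum_eq_zero fun i hi ↦ ?_
  calc _ = p.coeff i *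
        ∫ η in (0:ℝ)..1, η ^ i * jacobiP k a b (1 - 2 * η) * (η ^ a * (1 - η) ^ b) := by
        rw [← intervalIntegral.integral_const_mul]
        simp_rw [mul_assoc]
    _ = 0 := by rw [integral_pow_mul_jacobiP_mul_eq_zero a b (mem_range.mp hi), mul_zero]

theorem integral_jacobiP_mul_jacobiP_mul_eq_zero (a b : ℕ) {k l : ℕ} (h : k ≠ l) :
    ∫ η in (0:ℝ)..1,
      jacobiP k a b (1 - 2 * η) * jacobiP l a b (1 - 2 * η) * (η ^ a * (1 - η) ^ b) = 0 := by
  wlog hlk : l < k generalizing k l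
  · simp_rw [mul_comm (jacobiP k a b _) (jacobiP l a b _)]
    exact this h.symm (by omega)
  obtain ⟨p, hdeg, hp⟩ := exists_natDegree_le_eval_eq_jacobiP l a b
  simp_rw [← hp, mul_comm (jacobiP k a b _) (p.eval _)]
  exact integral_eval_mul_jacobiP_mul_eq_zero a b (hdeg.trans_lt hlk)

theorem integral_legendre_mul_legendre_eq_zero {m m' : ℕ} (h : m ≠ m') :
    ∫ t in (0:ℝ)..1, jacobiP m 0 0 (2 * t - 1) * jacobiP m' 0 0 (2 * t - 1) = 0 := by
  have horth := integral_jacobiP_mul_jacobiP_mul_eq_zero 0 0 h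
  simp only [pow_zero, mul_one] at horth
  calc _ = ∫ t in (0:ℝ)..1,
        (fun u ↦ jacobiP m 0 0 (1 - 2 * u) * jacobiP m' 0 0 (1 - 2 * u)) (1 - t) := by
        simp only [show ∀ t : ℝ, 1 - 2 * (1 - t) = 2 * t - 1 from fun t ↦ by ring]
    _ = 0 := by
        rw [intervalIntegral.integral_comp_sub_left
          (fun u ↦ jacobiP m 0 0 (1 - 2 * u) * jacobiP m' 0 0 (1 - 2 * u))]
        simpa using horth

end JacobiOrthogonality

section KoornwinderPolynomial

open Finset

noncomputable def homogenizedJacobiP (n a b : ℕ) (x y : ℝ) : ℝ :=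
  ∑ s ∈ range (n + 1), (n + a).choose (n - s) * (n + b).choose s *
    ((x - y) / 2) ^ s * ((x + y) / 2) ^ (n - s)

theorem homogenizedJacobiP_one (n a b : ℕ) (x : ℝ) :
    homogenizedJacobiP n a b x 1 = jacobiP n a b x := rfl

theorem homogenizedJacobiP_mul_mul (n a b : ℕ) (c x y : ℝ) :
    homogenizedJacobiP n a b (c * x) (c * y) = c ^ n * homogenizedJacobiP n a b x y := by
  rw [homogenizedJacobiP, homogenizedJacobiP, mul_sum]
  refine sum_congr rfl fun s hs ↦ ?_
  rw [← pow_sub_mul_pow c (Nat.le_of_lt_succ (mem_range.mp hs)), ← mul_sub, ← mul_add,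
    mul_div_assoc, mul_div_assoc, mul_pow, mul_pow]
  ring

theorem jacobiP_div_mul_pow (n a b : ℕ) (x : ℝ) {y : ℝ} (hy : y ≠ 0) :
    jacobiP n a b (x / y) * y ^ n = homogenizedJacobiP n a b x y := by
  rw [← homogenizedJacobiP_one, mul_comm, ← homogenizedJacobiP_mul_mul, mul_div_cancel₀ x hy,
    mul_one]

theorem integral_homogenizedJacobiP_mul_homogenizedJacobiP (m a b m' a' b' : ℕ) (c : ℝ) :
    ∫ ξ in (0:ℝ)..c,
      homogenizedJacobiP m a b (2 * ξ - c) c * homogenizedJacobiP m' a' b' (2 * ξ - c) c =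
      c ^ (m + m' + 1) *
        ∫ t in (0:ℝ)..1, jacobiP m a b (2 * t - 1) * jacobiP m' a' b' (2 * t - 1) := by
  rcases eq_or_ne c 0 with rfl | hc
  · simp
  have hscale : ∀ (m a b : ℕ) (t : ℝ),
      homogenizedJacobiP m a b (2 * (c * t) - c) c = c ^ m * jacobiP m a b (2 * t - 1) :=
    fun m a b t ↦ by
      rw [← homogenizedJacobiP_one, ← homogenizedJacobiP_mul_mul, mul_one, mul_sub, mul_one,
        mul_left_comm]
  have hsubst := intervalIntegral.integral_comp_mul_left (a := 0) (b := 1)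
    (fun ξ ↦ homogenizedJacobiP m a b (2 * ξ - c) c * homogenizedJacobiP m' a' b' (2 * ξ - c) c)
    hc
  simp only [hscale, mul_zero, mul_one, smul_eq_mul] at hsubst
  rw [eq_inv_mul_iff_mul_eq₀ hc] at hsubst
  rw [← hsubst, ← intervalIntegral.integral_const_mul, ← intervalIntegral.integral_const_mul]
  congr 1 with t
  ring

-- Unlike `koornwinder`, whose division by `1 - η` takes junk values on the line `η = 1`,
-- this is continuous.
noncomputable def koornwinderPoly (γ : ℝ) (n m : ℕ) (ξ η : ℝ) : ℝ :=
  γ * jacobiP (n - m) 0 (2 * m + 1) (1 - 2 * η) *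
    homogenizedJacobiP m 0 0 (2 * ξ - (1 - η)) (1 - η)

theorem koornwinder_eq_koornwinderPoly (γ : ℝ) (n m : ℕ) (ξ : ℝ) {η : ℝ} (hη : η ≠ 1) :
    koornwinder γ n m ξ η = koornwinderPoly γ n m ξ η := by
  have hη' : 1 - η ≠ 0 := sub_ne_zero.mpr hη.symm
  rw [koornwinder, koornwinderPoly, mul_assoc, ← jacobiP_div_mul_pow _ _ _ _ hη']
  congr 3
  field_simp

@[fun_prop]
theorem continuous_koornwinderPoly (γ : ℝ) (n m : ℕ) :
    Continuous fun p : ℝ × ℝ ↦ koornwinderPoly γ n m p.1 p.2 := by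
  unfold koornwinderPoly homogenizedJacobiP
  fun_prop

theorem integral_koornwinderPoly_mul_koornwinderPoly (γ γ' : ℝ) (n m n' m' : ℕ) (η : ℝ) :
    ∫ ξ in (0:ℝ)..(1 - η), koornwinderPoly γ n m ξ η * koornwinderPoly γ' n' m' ξ η =
      γ * γ' * (∫ t in (0:ℝ)..1, jacobiP m 0 0 (2 * t - 1) * jacobiP m' 0 0 (2 * t - 1)) *
        (jacobiP (n - m) 0 (2 * m + 1) (1 - 2 * η) *
          jacobiP (n' - m') 0 (2 * m' + 1) (1 - 2 * η) * (1 - η) ^ (m + m' + 1)) := by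
  simp only [koornwinderPoly, mul_mul_mul_comm (γ * _), intervalIntegral.integral_const_mul,
    integral_homogenizedJacobiP_mul_homogenizedJacobiP]
  ring

end KoornwinderPolynomial

theorem mk_mem_stdSimplex2_iff {ξ η : ℝ} :
    (ξ, η) ∈ stdSimplex2 ↔ η ∈ Icc 0 1 ∧ ξ ∈ Icc 0 (1 - η) := by
  constructor
  · rintro ⟨hξ, hη, hsum⟩
    exact ⟨⟨hη, by linarith⟩, hξ, by linarith⟩
  · rintro ⟨⟨hη, -⟩, hξ, hsum⟩
    exact ⟨hξ, hη, by linarith⟩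

theorem isCompact_stdSimplex2 : IsCompact stdSimplex2 := by
  refine (isCompact_Icc (a := ((0:ℝ), (0:ℝ))) (b := (1, 1))).of_isClosed_subset ?_
    fun p hp ↦ ?_
  · exact (isClosed_le continuous_const continuous_fst).inter
      ((isClosed_le continuous_const continuous_snd).inter
        (isClosed_le (continuous_fst.add continuous_snd) continuous_const))
  · obtain ⟨h₁, h₂, h₃⟩ := hp
    exact ⟨⟨h₁, h₂⟩, by linarith, by linarith⟩

theorem setIntegral_stdSimplex2 {F : ℝ × ℝ → ℝ} (hF : IntegrableOn F stdSimplex2) :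
    ∫ p in stdSimplex2, F p = ∫ η in (0:ℝ)..1, ∫ ξ in (0:ℝ)..(1 - η), F (ξ, η) := by
  have hS : MeasurableSet stdSimplex2 := isCompact_stdSimplex2.isClosed.measurableSet
  have hslice : ∀ η : ℝ, ∫ ξ, stdSimplex2.indicator F (ξ, η) =
      (Icc 0 1).indicator (fun η ↦ ∫ ξ in (0:ℝ)..(1 - η), F (ξ, η)) η := fun η ↦ by
    by_cases hη : η ∈ Icc (0:ℝ) 1
    · have hind : (fun ξ ↦ stdSimplex2.indicator F (ξ, η)) =
          (Icc 0 (1 - η)).indicator fun ξ ↦ F (ξ, η) := by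
        ext ξ
        simp only [indicator, mk_mem_stdSimplex2_iff, hη, true_and]
      rw [hind, integral_indicator measurableSet_Icc, indicator_of_mem hη,
        integral_Icc_eq_integral_Ioc, ← intervalIntegral.integral_of_le (by linarith [hη.2])]
    · have hzero : ∀ ξ, stdSimplex2.indicator F (ξ, η) = 0 := fun ξ ↦
        indicator_of_notMem (fun h ↦ hη (mk_mem_stdSimplex2_iff.1 h).1) F
      simp only [hzero, integral_zero, indicator_of_notMem hη]
  have hint := (integrable_indicator_iff hS).2 hF
  rw [Measure.volume_eq_prod] at hint
  rw [← integral_indicator hS, Measure.volume_eq_prod, integral_prod_symm _ hint,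
    funext hslice, integral_indicator measurableSet_Icc, integral_Icc_eq_integral_Ioc,
    ← intervalIntegral.integral_of_le zero_le_one]

theorem setIntegral_koornwinder_mul_koornwinder (γ γ' : ℝ) (n m n' m' : ℕ) :
    ∫ p in stdSimplex2, koornwinder γ n m p.1 p.2 * koornwinder γ' n' m' p.1 p.2 =
      γ * γ' * (∫ t in (0:ℝ)..1, jacobiP m 0 0 (2 * t - 1) * jacobiP m' 0 0 (2 * t - 1)) *
        ∫ η in (0:ℝ)..1, jacobiP (n - m) 0 (2 * m + 1) (1 - 2 * η) *
          jacobiP (n' - m') 0 (2 * m' + 1) (1 - 2 * η) * (1 - η) ^ (m + m' + 1) := by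
  have hline : ∀ᵐ p : ℝ × ℝ, p.2 ≠ 1 := by
    rw [Measure.volume_eq_prod]
    exact Measure.quasiMeasurePreserving_snd.ae (Measure.ae_ne volume 1)
  have hcont : Continuous fun p : ℝ × ℝ ↦
      koornwinderPoly γ n m p.1 p.2 * koornwinderPoly γ' n' m' p.1 p.2 := by fun_prop
  rw [setIntegral_congr_ae isCompact_stdSimplex2.isClosed.measurableSet
      (hline.mono fun p hp _ ↦ by
        rw [koornwinder_eq_koornwinderPoly _ _ _ _ hp, koornwinder_eq_koornwinderPoly _ _ _ _ hp]),
    setIntegral_stdSimplex2 (hcont.continuousOn.integrableOn_compact isCompact_stdSimplex2)]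
  simp only [integral_koornwinderPoly_mul_koornwinderPoly, intervalIntegral.integral_const_mul]

theorem koornwinder_orthogonal_general
    (γ : ℕ → ℕ → ℝ)
    (n m n' m' : ℕ) (hm : m ≤ n) (hm' : m' ≤ n') (hne : (n, m) ≠ (n', m')) :
    ∫ p in stdSimplex2,
      koornwinder (γ n m) n m p.1 p.2 * koornwinder (γ n' m') n' m' p.1 p.2 = 0 := by
  rw [setIntegral_koornwinder_mul_koornwinder]
  rcases eq_or_ne m m' with rfl | hmm'
  · have hk : n - m ≠ n' - m := fun h ↦ hne (by rw [show n = n' by omega])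
    have horth := integral_jacobiP_mul_jacobiP_mul_eq_zero 0 (2 * m + 1) hk
    simp only [pow_zero, one_mul] at horth
    rw [show m + m + 1 = 2 * m + 1 by ring, horth, mul_zero]
  · rw [integral_legendre_mul_legendre_eq_zero hmm', mul_zero, zero_mul]

/-- Orthogonality of the Koornwinder polynomials on the standard simplex:
`∫_{T̂₀} K_{nm} K_{n'm'} dξ dη = 0` whenever `(n,m) ≠ (n',m')`. -/
theorem koornwinder_orthogonal
    (γ : ℕ → ℕ → ℝ) (hγ : ∀ n m, 0 < γ n m)
    (hnorm : ∀ n m, m ≤ n →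
      (∫ p in stdSimplex2, (koornwinder (γ n m) n m p.1 p.2) ^ 2) = 1)
    (n m n' m' : ℕ) (hm : m ≤ n) (hm' : m' ≤ n') (hne : (n, m) ≠ (n', m')) :
    ∫ p in stdSimplex2,
      koornwinder (γ n m) n m p.1 p.2 * koornwinder (γ n' m') n' m' p.1 p.2 = 0 :=
  koornwinder_orthogonal_general γ n m n' m' hm hm' hne
end

section
/- Each Koornwinder function K_{nm}(ξ,η) = γ_{nm} P_{n−m}^{(0,2m+1)}(1−2η) P_m^{(0,0)}(2ξ/(1−η) − 1)(1−η)^m (0 ≤ m ≤ n) is a polynomial in (ξ,η) of total degree exactly n; consequently the set {K_{nm} : 0 ≤ m ≤ n, 0 ≤ n < p} consists of p(p+1)/2 polynomials forming a basis for the space of polynomials in two variables of total degree less than p. -/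
open MeasureTheory Set

open MvPolynomial Finset

noncomputable def Rpoly (k M : ℕ) : Polynomial ℝ :=
  ∑ s ∈ Finset.range (k+1), Polynomial.C ((k.choose (k-s) * (k+M).choose s : ℕ) : ℝ) *
    ((-Polynomial.X) ^ s * (1 - Polynomial.X) ^ (k - s))

noncomputable def Qpoly (m : ℕ) : MvPolynomial (Fin 2) ℝ :=
  ∑ t ∈ Finset.range (m+1), C ((m.choose (m-t) * m.choose t : ℕ) : ℝ) *
    ((X 0 + X 1 - 1) ^ t * (X 0 : MvPolynomial (Fin 2) ℝ) ^ (m - t))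

noncomputable def Kpoly (γ : ℝ) (n m : ℕ) : MvPolynomial (Fin 2) ℝ :=
  C γ * (Polynomial.aeval (X 1 : MvPolynomial (Fin 2) ℝ) (Rpoly (n-m) (2*m+1))) * Qpoly m

lemma eval_aevalX1 (v : Fin 2 → ℝ) (f : Polynomial ℝ) :
    eval v (Polynomial.aeval (X 1 : MvPolynomial (Fin 2) ℝ) f) = Polynomial.eval (v 1) f := by
  rw [Polynomial.aeval_def, Polynomial.hom_eval₂]
  have : (eval v).comp (C : ℝ →+* MvPolynomial (Fin 2) ℝ) = RingHom.id ℝ := by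
    ext x; simp
  simp [Polynomial.eval₂_eq_eval_map, this]

lemma jacobi_eta (k M : ℕ) (η : ℝ) :
    jacobiP k 0 M (1 - 2*η)
      = ∑ s ∈ Finset.range (k+1),
          ((k.choose (k-s) * (k+M).choose s : ℕ) : ℝ) * ((-η)^s * (1-η)^(k-s)) := by
  unfold jacobiP
  refine Finset.sum_congr rfl fun s hs => ?_
  have h1 : ((1 - 2*η) - 1)/2 = -η := by ring
  have h2 : ((1 - 2*η) + 1)/2 = 1 - η := by ring
  rw [h1, h2]
  push_cast
  ring

lemma jacobi_xi (m : ℕ) (ξ η : ℝ) (h : (1:ℝ) - η ≠ 0) :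
    jacobiP m 0 0 (2*ξ/(1-η) - 1) * (1-η)^m
      = ∑ t ∈ Finset.range (m+1),
          ((m.choose (m-t) * m.choose t : ℕ) : ℝ) * ((ξ + η - 1)^t * ξ^(m-t)) := by
  unfold jacobiP
  rw [Finset.sum_mul]
  refine Finset.sum_congr rfl fun t ht => ?_
  have htm : t ≤ m := by simpa using Nat.lt_succ_iff.mp (Finset.mem_range.mp ht)
  have h1 : ((2*ξ/(1-η) - 1) - 1)/2 * (1-η) = ξ + η - 1 := by field_simp; ring
  have h2 : ((2*ξ/(1-η) - 1) + 1)/2 * (1-η) = ξ := by field_simp; ring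
  have hsplit : (1-η)^m = (1-η)^t * (1-η)^(m-t) := by
    rw [← pow_add, Nat.add_sub_cancel' htm]
  calc (m+0).choose (m-t) * (m.choose t : ℝ) * (((2*ξ/(1-η) - 1) - 1)/2)^t *
        ((((2*ξ/(1-η) - 1) + 1))/2)^(m-t) * (1-η)^m
      = (m.choose (m-t) * m.choose t : ℕ)
          * ((((2*ξ/(1-η) - 1) - 1)/2 * (1-η))^t * ((((2*ξ/(1-η) - 1) + 1))/2 * (1-η))^(m-t)) := by
        rw [hsplit, mul_pow, mul_pow]
        push_cast
        ring
    _ = _ := by rw [h1, h2]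

lemma eval_Kpoly (γ : ℝ) (n m : ℕ) (ξ η : ℝ) (hη : η ≠ 1) :
    eval ![ξ, η] (Kpoly γ n m) = koornwinder γ n m ξ η := by
  have h1 : (1:ℝ) - η ≠ 0 := sub_ne_zero.mpr (Ne.symm hη)
  have hQ : eval ![ξ, η] (Qpoly m)
      = ∑ t ∈ Finset.range (m+1),
          ((m.choose (m-t) * m.choose t : ℕ) : ℝ) * ((ξ + η - 1)^t * ξ^(m-t)) := by
    simp [Qpoly]
  have hR : Polynomial.eval η (Rpoly (n-m) (2*m+1))
      = ∑ s ∈ Finset.range ((n-m)+1),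
          (((n-m).choose ((n-m)-s) * ((n-m)+(2*m+1)).choose s : ℕ) : ℝ)
            * ((-η)^s * (1-η)^((n-m)-s)) := by
    simp [Rpoly, Polynomial.eval_finset_sum]
  rw [Kpoly, koornwinder]
  rw [map_mul, map_mul, eval_C, eval_aevalX1]
  have : (![ξ, η] : Fin 2 → ℝ) 1 = η := rfl
  rw [this, hR, hQ, jacobi_eta (n-m) (2*m+1) η, ← jacobi_xi m ξ η h1]
  ring

lemma natDegree_Rpoly_le (k M : ℕ) : (Rpoly k M).natDegree ≤ k := by
  refine Polynomial.natDegree_sum_le_of_forall_le _ _ fun s hs => ?_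
  have hsk : s ≤ k := Nat.lt_succ_iff.mp (Finset.mem_range.mp hs)
  calc (Polynomial.C ((k.choose (k-s) * (k+M).choose s : ℕ) : ℝ) *
        ((-Polynomial.X) ^ s * (1 - Polynomial.X) ^ (k - s))).natDegree
      ≤ _ + _ := Polynomial.natDegree_mul_le
    _ ≤ 0 + (s * 1 + (k-s) * 1) := by
        gcongr
        · exact le_of_eq (Polynomial.natDegree_C _)
        · refine le_trans Polynomial.natDegree_mul_le ?_
          gcongr
          · refine le_trans (Polynomial.natDegree_pow_le) ?_
            simp
          · refine le_trans (Polynomial.natDegree_pow_le) ?_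
            gcongr
            refine le_trans (Polynomial.natDegree_sub_le _ _) ?_
            simp
    _ ≤ k := by omega

lemma totalDegree_aevalX1_le (f : Polynomial ℝ) :
    (Polynomial.aeval (X 1 : MvPolynomial (Fin 2) ℝ) f).totalDegree ≤ f.natDegree := by
  rw [Polynomial.aeval_def, Polynomial.eval₂_eq_sum_range]
  refine totalDegree_finsetSum_le fun i hi => ?_
  have hi' : i ≤ f.natDegree := Nat.lt_succ_iff.mp (Finset.mem_range.mp hi)
  refine le_trans (totalDegree_mul _ _) (le_trans ?_ (show 0 + i * 1 ≤ f.natDegree by omega))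
  gcongr
  · simp [totalDegree_C]
  · exact le_trans (totalDegree_pow _ _) (by simp)

lemma totalDegree_Qpoly_le (m : ℕ) : (Qpoly m).totalDegree ≤ m := by
  refine totalDegree_finsetSum_le fun t ht => ?_
  have htm : t ≤ m := Nat.lt_succ_iff.mp (Finset.mem_range.mp ht)
  calc _ ≤ _ + _ := totalDegree_mul _ _
    _ ≤ 0 + (t * 1 + (m-t) * 1) := by
        gcongr
        · exact le_of_eq (totalDegree_C _)
        · refine le_trans (totalDegree_mul _ _) ?_
          gcongr
          · refine le_trans (totalDegree_pow _ _) ?_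
            gcongr
            refine le_trans (totalDegree_sub_C_le _ _) ?_
            refine le_trans (totalDegree_add _ _) ?_
            simp
          · exact le_trans (totalDegree_pow _ _) (by simp)
    _ ≤ m := by omega

lemma totalDegree_Kpoly_le (γ : ℝ) (n m : ℕ) (hm : m ≤ n) :
    (Kpoly γ n m).totalDegree ≤ n := by
  calc (Kpoly γ n m).totalDegree ≤ _ + _ := totalDegree_mul _ _
    _ ≤ (0 + (n - m)) + m := by
        gcongr
        · refine le_trans (totalDegree_mul _ _) ?_
          gcongr
          · simp
          · exact le_trans (totalDegree_aevalX1_le _) (natDegree_Rpoly_le _ _)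
        · exact totalDegree_Qpoly_le m
    _ ≤ n := by omega

lemma degreeOf_fsum_le {ι : Type*} (s : Finset ι) (f : ι → MvPolynomial (Fin 2) ℝ)
    (i : Fin 2) (k : ℕ) (h : ∀ j ∈ s, degreeOf i (f j) ≤ k) :
    degreeOf i (∑ j ∈ s, f j) ≤ k := by
  induction s using Finset.cons_induction with
  | empty => simp [degreeOf_zero]
  | cons a s has ih =>
    rw [Finset.sum_cons]
    refine le_trans (degreeOf_add_le _ _ _) (max_le (h a (Finset.mem_cons_self _ _)) ?_)
    exact ih fun j hj => h j (Finset.mem_cons_of_mem hj)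

lemma degreeOf0_X1pow (i : ℕ) :
    degreeOf (0 : Fin 2) ((X 1 : MvPolynomial (Fin 2) ℝ) ^ i) ≤ 0 := by
  rw [X_pow_eq_monomial]
  refine degreeOf_le_iff.mpr fun d hd => ?_
  have hd' : d = Finsupp.single 1 i := Finset.mem_singleton.mp (support_monomial_subset hd)
  subst hd'
  simp [Finsupp.single_apply]

lemma degreeOf0_aevalX1 (f : Polynomial ℝ) :
    degreeOf 0 (Polynomial.aeval (X 1 : MvPolynomial (Fin 2) ℝ) f) ≤ 0 := by
  rw [Polynomial.aeval_def, Polynomial.eval₂_eq_sum_range]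
  refine degreeOf_fsum_le _ _ _ _ fun i hi => ?_
  refine le_trans (degreeOf_mul_le _ _ _) ?_
  have h1 : degreeOf (0 : Fin 2) ((algebraMap ℝ (MvPolynomial (Fin 2) ℝ)) (f.coeff i)) = 0 :=
    degreeOf_C _ _
  have h2 := degreeOf0_X1pow i
  omega

lemma degreeOf0_Qpoly_le (m : ℕ) : degreeOf 0 (Qpoly m) ≤ m := by
  refine degreeOf_fsum_le _ _ _ _ fun t ht => ?_
  have htm : t ≤ m := Nat.lt_succ_iff.mp (Finset.mem_range.mp ht)
  refine le_trans (degreeOf_mul_le _ _ _) ?_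
  have h1 : degreeOf (0 : Fin 2) (C ((m.choose (m-t) * m.choose t : ℕ) : ℝ) : MvPolynomial (Fin 2) ℝ) = 0 :=
    degreeOf_C _ _
  have h2 : degreeOf (0 : Fin 2) ((X 0 + X 1 - 1 : MvPolynomial (Fin 2) ℝ) ^ t * (X 0 : MvPolynomial (Fin 2) ℝ) ^ (m - t)) ≤ m := by
    refine le_trans (degreeOf_mul_le _ _ _) ?_
    have h3 : degreeOf (0 : Fin 2) ((X 0 + X 1 - 1 : MvPolynomial (Fin 2) ℝ) ^ t) ≤ t := by
      refine le_trans (degreeOf_le_totalDegree _ _) ?_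
      refine le_trans (totalDegree_pow _ _) ?_
      have : (X 0 + X 1 - 1 : MvPolynomial (Fin 2) ℝ).totalDegree ≤ 1 := by
        refine le_trans (totalDegree_sub_C_le _ _) ?_
        refine le_trans (totalDegree_add _ _) (by simp)
      calc t * (X 0 + X 1 - 1 : MvPolynomial (Fin 2) ℝ).totalDegree ≤ t * 1 := by gcongr
        _ = t := by omega
    have h4 : degreeOf (0 : Fin 2) ((X 0 : MvPolynomial (Fin 2) ℝ) ^ (m - t)) ≤ m - t := by
      refine le_trans (degreeOf_le_totalDegree _ _) ?_
      exact le_trans (totalDegree_pow _ _) (by simp)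
    omega
  omega

lemma degreeOf0_Kpoly_le (γ : ℝ) (n m : ℕ) : degreeOf 0 (Kpoly γ n m) ≤ m := by
  refine le_trans (degreeOf_mul_le _ _ _) ?_
  have h1 : degreeOf (0 : Fin 2) (C γ * (Polynomial.aeval (X 1 : MvPolynomial (Fin 2) ℝ) (Rpoly (n-m) (2*m+1)))) ≤ 0 := by
    refine le_trans (degreeOf_mul_le _ _ _) ?_
    have := degreeOf0_aevalX1 (Rpoly (n-m) (2*m+1))
    have h2 : degreeOf (0 : Fin 2) (C γ : MvPolynomial (Fin 2) ℝ) = 0 := degreeOf_C _ _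
    omega
  have := degreeOf0_Qpoly_le m
  omega

noncomputable def E (a b : ℕ) : Fin 2 →₀ ℕ := Finsupp.single 0 a + Finsupp.single 1 b

lemma E_apply0 (a b : ℕ) : E a b 0 = a := by simp [E, Finsupp.single_apply]
lemma E_apply1 (a b : ℕ) : E a b 1 = b := by simp [E, Finsupp.single_apply]

lemma eq_E (d : Fin 2 →₀ ℕ) : d = E (d 0) (d 1) := by
  ext i
  fin_cases i <;> simp [E, Finsupp.single_apply]

lemma E_inj {a b c d : ℕ} (h : E a b = E c d) : a = c ∧ b = d := by
  constructor
  · have := congrArg (fun g => g 0) h; simpa [E_apply0] using this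
  · have := congrArg (fun g => g 1) h; simpa [E_apply1] using this

lemma coeff_X0pow_mul_aevalX1 (f : Polynomial ℝ) (a b c : ℕ) :
    coeff (E a b) ((X 0 : MvPolynomial (Fin 2) ℝ) ^ c * Polynomial.aeval (X 1) f)
      = if c = a then f.coeff b else 0 := by
  induction f using Polynomial.induction_on' with
  | add p q hp hq =>
      rw [map_add, mul_add, coeff_add, hp, hq, Polynomial.coeff_add]
      split_ifs <;> simp
  | monomial d r =>
      have h1 : (Polynomial.aeval (X 1 : MvPolynomial (Fin 2) ℝ)) (Polynomial.monomial d r)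
          = C r * X 1 ^ d := by
        rw [Polynomial.aeval_monomial]; rfl
      have h2 : (X 0 : MvPolynomial (Fin 2) ℝ)^c * (C r * X 1 ^ d) = monomial (E c d) r := by
        rw [X_pow_eq_monomial, X_pow_eq_monomial, C_apply, monomial_mul, monomial_mul, E]
        simp
      rw [h1, h2, coeff_monomial, Polynomial.coeff_monomial]
      by_cases hc : c = a <;> by_cases hd : d = b
      · subst hc; subst hd; simp
      · have h3 : ¬ (E c d = E a b) := fun h => hd (E_inj h).2
        rw [if_neg h3, if_neg hd]
        simp
      · have h3 : ¬ (E c d = E a b) := fun h => hc (E_inj h).1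
        rw [if_neg h3, if_neg hc]
      · have h3 : ¬ (E c d = E a b) := fun h => hc (E_inj h).1
        rw [if_neg h3, if_neg hc]

lemma coeff_one_sub_X_pow (j : ℕ) : ((1 - Polynomial.X : Polynomial ℝ) ^ j).coeff j = (-1)^j := by
  have h : (1 - Polynomial.X : Polynomial ℝ) = Polynomial.C (-1 : ℝ) * (Polynomial.X - Polynomial.C 1) := by
    simp
  rw [h, mul_pow, ← Polynomial.C_pow, Polynomial.coeff_C_mul]
  have hm : ((Polynomial.X - Polynomial.C (1:ℝ))^j).Monic := (Polynomial.monic_X_sub_C 1).pow j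
  have hd : ((Polynomial.X - Polynomial.C (1:ℝ))^j).natDegree = j := by
    rw [Polynomial.natDegree_pow, Polynomial.natDegree_X_sub_C, mul_one]
  have := hm.coeff_natDegree
  rw [hd] at this
  rw [this, mul_one]

lemma coeff_Rpoly (k M : ℕ) :
    (Rpoly k M).coeff k
      = (-1)^k * ∑ s ∈ Finset.range (k+1), ((k.choose (k-s) * (k+M).choose s : ℕ) : ℝ) := by
  rw [Rpoly, Polynomial.finset_sum_coeff, Finset.mul_sum]
  refine Finset.sum_congr rfl fun s hs => ?_
  have hsk : s ≤ k := Nat.lt_succ_iff.mp (Finset.mem_range.mp hs)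
  rw [Polynomial.coeff_C_mul]
  have hC : (-1 : Polynomial ℝ) = Polynomial.C (-1 : ℝ) := by simp
  have hneg : (-Polynomial.X : Polynomial ℝ)^s = Polynomial.C ((-1:ℝ)^s) * Polynomial.X^s := by
    rw [neg_pow, hC, ← Polynomial.C_pow]
  rw [hneg, mul_assoc, Polynomial.coeff_C_mul]
  have hxc := Polynomial.coeff_X_pow_mul ((1 - Polynomial.X : Polynomial ℝ)^(k-s)) s (k-s)
  have hks : k - s + s = k := by omega
  rw [hks] at hxc
  rw [hxc, coeff_one_sub_X_pow]
  have hsum : s + (k - s) = k := by omega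
  rw [← pow_add, hsum]
  ring

lemma coeff_term (f : Polynomial ℝ) (m t k : ℕ) (htm : t ≤ m) :
    coeff (E m k) ((X 0 + X 1 - 1 : MvPolynomial (Fin 2) ℝ)^t * (X 0)^(m-t)
        * Polynomial.aeval (X 1) f) = f.coeff k := by
  have hB : (X 0 + X 1 - 1 : MvPolynomial (Fin 2) ℝ)
      = X 0 + Polynomial.aeval (X 1 : MvPolynomial (Fin 2) ℝ) (Polynomial.X - 1 : Polynomial ℝ) := by
    rw [map_sub, Polynomial.aeval_X, map_one]
    ring
  rw [hB, add_pow, Finset.sum_mul, Finset.sum_mul, coeff_sum]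
  have key : ∀ j ∈ Finset.range (t+1),
      coeff (E m k) ((X 0:MvPolynomial (Fin 2) ℝ)^j
          * (Polynomial.aeval (X 1 : MvPolynomial (Fin 2) ℝ) (Polynomial.X - 1 : Polynomial ℝ))^(t-j)
          * ((t.choose j : ℕ) : MvPolynomial (Fin 2) ℝ) * (X 0)^(m-t)
          * Polynomial.aeval (X 1) f)
        = if j = t then f.coeff k else 0 := by
    intro j hj
    have hjt : j ≤ t := Nat.lt_succ_iff.mp (Finset.mem_range.mp hj)
    have e1 : Polynomial.aeval (X 1 : MvPolynomial (Fin 2) ℝ) ((Polynomial.X - 1 : Polynomial ℝ)^(t-j) * f)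
        = (Polynomial.aeval (X 1 : MvPolynomial (Fin 2) ℝ) (Polynomial.X - 1 : Polynomial ℝ))^(t-j)
            * Polynomial.aeval (X 1) f := by
      rw [map_mul, map_pow]
    have e2 : (X 0:MvPolynomial (Fin 2) ℝ)^j
          * (Polynomial.aeval (X 1 : MvPolynomial (Fin 2) ℝ) (Polynomial.X - 1 : Polynomial ℝ))^(t-j)
          * ((t.choose j : ℕ) : MvPolynomial (Fin 2) ℝ) * (X 0)^(m-t)
          * Polynomial.aeval (X 1) f
        = C ((t.choose j : ℕ) : ℝ)
            * ((X 0:MvPolynomial (Fin 2) ℝ)^(j + (m-t))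
                * Polynomial.aeval (X 1) ((Polynomial.X - 1 : Polynomial ℝ)^(t-j) * f)) := by
      rw [e1, pow_add, MvPolynomial.C_eq_coe_nat]
      ring
    rw [e2, coeff_C_mul, coeff_X0pow_mul_aevalX1]
    by_cases hjt' : j = t
    · subst hjt'
      have hms : j + (m - j) = m := by omega
      simp [hms, Nat.sub_self]
    · have hne : j + (m-t) ≠ m := by omega
      simp [hne, hjt']
  rw [Finset.sum_congr rfl key, Finset.sum_ite_eq' (Finset.range (t+1)) t]
  simp

lemma coeff_Kpoly_top (γ : ℝ) (n m : ℕ) :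
    coeff (E m (n-m)) (Kpoly γ n m)
      = γ * ((∑ t ∈ Finset.range (m+1), ((m.choose (m-t) * m.choose t : ℕ) : ℝ))
          * ((Rpoly (n-m) (2*m+1)).coeff (n-m))) := by
  rw [Kpoly, mul_assoc, coeff_C_mul, Qpoly, Finset.mul_sum, coeff_sum]
  congr 1
  rw [Finset.sum_mul]
  refine Finset.sum_congr rfl fun t ht => ?_
  have htm : t ≤ m := Nat.lt_succ_iff.mp (Finset.mem_range.mp ht)
  have e : Polynomial.aeval (X 1 : MvPolynomial (Fin 2) ℝ) (Rpoly (n-m) (2*m+1))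
        * (C ((m.choose (m-t) * m.choose t : ℕ) : ℝ)
          * ((X 0 + X 1 - 1) ^ t * (X 0 : MvPolynomial (Fin 2) ℝ) ^ (m - t)))
      = C ((m.choose (m-t) * m.choose t : ℕ) : ℝ)
          * ((X 0 + X 1 - 1 : MvPolynomial (Fin 2) ℝ)^t * (X 0)^(m-t)
              * Polynomial.aeval (X 1) (Rpoly (n-m) (2*m+1))) := by ring
  rw [e, coeff_C_mul, coeff_term _ _ _ _ htm]

lemma coeff_Kpoly_top_ne (γ : ℝ) (hγ : γ ≠ 0) (n m : ℕ) :
    coeff (E m (n-m)) (Kpoly γ n m) ≠ 0 := by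
  rw [coeff_Kpoly_top, coeff_Rpoly]
  have h1 : (0:ℝ) < ∑ t ∈ Finset.range (m+1), ((m.choose (m-t) * m.choose t : ℕ) : ℝ) := by
    refine Finset.sum_pos (fun t ht => ?_) ⟨0, Finset.mem_range.mpr (Nat.succ_pos m)⟩
    have htm : t ≤ m := Nat.lt_succ_iff.mp (Finset.mem_range.mp ht)
    have := Nat.choose_pos (Nat.sub_le m t)
    have := Nat.choose_pos htm
    positivity
  have h2 : (0:ℝ) < ∑ s ∈ Finset.range ((n-m)+1),
      (((n-m).choose ((n-m)-s) * ((n-m)+(2*m+1)).choose s : ℕ) : ℝ) := by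
    refine Finset.sum_pos (fun s hs => ?_) ⟨0, Finset.mem_range.mpr (Nat.succ_pos _)⟩
    have hsk : s ≤ n - m := Nat.lt_succ_iff.mp (Finset.mem_range.mp hs)
    have := Nat.choose_pos (Nat.sub_le (n-m) s)
    have := Nat.choose_pos (show s ≤ (n-m)+(2*m+1) by omega)
    positivity
  have h3 : ((-1:ℝ))^(n-m) ≠ 0 := pow_ne_zero _ (by norm_num)
  exact mul_ne_zero hγ (mul_ne_zero (ne_of_gt h1) (mul_ne_zero h3 (ne_of_gt h2)))

lemma support_Kpoly (γ : ℝ) (n m : ℕ) (hm : m ≤ n) (d : Fin 2 →₀ ℕ)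
    (hd : coeff d (Kpoly γ n m) ≠ 0) : d 0 ≤ m ∧ d 0 + d 1 ≤ n := by
  constructor
  · exact le_trans (degreeOf_le_iff.mp le_rfl d (mem_support_iff.mpr hd))
      (degreeOf0_Kpoly_le γ n m)
  · have h1 := le_totalDegree (mem_support_iff.mpr hd)
    have h2 : (d.sum fun _ e => e) = d 0 + d 1 := by
      rw [Finsupp.sum_fintype _ _ (fun _ => rfl), Fin.sum_univ_two]
    have h3 := totalDegree_Kpoly_le γ n m hm
    omega

lemma totalDegree_Kpoly (γ : ℝ) (hγ : γ ≠ 0) (n m : ℕ) (hm : m ≤ n) :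
    (Kpoly γ n m).totalDegree = n := by
  refine le_antisymm (totalDegree_Kpoly_le γ n m hm) ?_
  have h := le_totalDegree (mem_support_iff.mpr (coeff_Kpoly_top_ne γ hγ n m))
  have h2 : ((E m (n-m)).sum fun _ e => e) = m + (n - m) := by
    rw [Finsupp.sum_fintype _ _ (fun _ => rfl), Fin.sum_univ_two, E_apply0, E_apply1]
  omega

section Basis

variable (p : ℕ) (hp : 0 < p) (γ : ℕ → ℕ → ℝ) (hγ : ∀ n m, 0 < γ n m)

-- the family
noncomputable def Fam : {q : ℕ × ℕ // q.2 ≤ q.1 ∧ q.1 < p} → MvPolynomial (Fin 2) ℝ :=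
  fun q => Kpoly (γ q.1.1 q.1.2) q.1.1 q.1.2

lemma mono_mem (hγ : ∀ n m, 0 < γ n m) (hp : 0 < p) :
    ∀ μ a b, (a+b)*p + a ≤ μ → a + b < p →
      monomial (E a b) (1:ℝ) ∈ Submodule.span ℝ (Set.range (Fam p γ)) := by
  intro μ
  induction μ using Nat.strong_induction_on with
  | _ μ ih =>
    intro a b hμ hab
    set n := a + b with hn
    have hq : b ≤ n ∧ n < p := ⟨by omega, hab⟩
    set q : {q : ℕ × ℕ // q.2 ≤ q.1 ∧ q.1 < p} := ⟨(n, a), ⟨by omega, hab⟩⟩ with hqdef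
    have hγ' : γ n a ≠ 0 := ne_of_gt (hγ n a)
    have hnm : n - a = b := by omega
    set c := coeff (E a b) (Fam p γ q) with hc
    have hcne : c ≠ 0 := by
      have := coeff_Kpoly_top_ne (γ n a) hγ' n a
      rw [hnm] at this
      exact this
    set g := Fam p γ q - c • monomial (E a b) (1:ℝ) with hg
    have hgmem : g ∈ Submodule.span ℝ (Set.range (Fam p γ)) := by
      rw [as_sum g]
      refine Submodule.sum_mem _ fun d hd => ?_
      have hdc : coeff d g ≠ 0 := mem_support_iff.mp hd
      have hcoeffg : coeff d g = coeff d (Fam p γ q) - c * (if E a b = d then 1 else 0) := by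
        rw [hg, coeff_sub, coeff_smul, coeff_monomial, smul_eq_mul]
      have hdne : d ≠ E a b := by
        intro h
        subst h
        rw [hcoeffg, if_pos rfl, mul_one, hc, sub_self] at hdc
        exact hdc rfl
      have hdF : coeff d (Fam p γ q) ≠ 0 := by
        intro h
        rw [hcoeffg, h, if_neg (fun hh => hdne hh.symm)] at hdc
        simp at hdc
      obtain ⟨hd0, hd01⟩ := support_Kpoly (γ n a) n a (by omega) d hdF
      -- d 0 ≤ a, d 0 + d 1 ≤ n
      have hdne' : ¬ (d 0 = a ∧ d 1 = b) := by
        intro ⟨h1, h2⟩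
        exact hdne (by rw [eq_E d, h1, h2])
      have hlt : (d 0 + d 1) * p + d 0 < μ := by
        by_cases hs : d 0 + d 1 = n
        · have hda : d 0 < a := by
            rcases Nat.lt_or_ge (d 0) a with h | h
            · exact h
            · exact absurd ⟨by omega, by omega⟩ hdne'
          rw [hs]
          omega
        · have hdn : d 0 + d 1 < n := by omega
          have h5 : (d 0 + d 1) * p ≤ (n-1) * p := Nat.mul_le_mul_right p (by omega)
          have h7 : n - 1 + 1 = n := by omega
          have h6 : n * p = (n-1) * p + p := by
            conv_lhs => rw [← h7]
            rw [Nat.succ_mul]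
          omega
      have hmem := ih _ hlt (d 0) (d 1) le_rfl (by omega)
      have hrepr : monomial d (coeff d g) = (coeff d g) • monomial (E (d 0) (d 1)) (1:ℝ) := by
        rw [smul_monomial, smul_eq_mul, mul_one, ← eq_E d]
      rw [hrepr]
      exact Submodule.smul_mem _ _ hmem
    have hFmem : Fam p γ q ∈ Submodule.span ℝ (Set.range (Fam p γ)) :=
      Submodule.subset_span ⟨q, rfl⟩
    have hsm : c • monomial (E a b) (1:ℝ) ∈ Submodule.span ℝ (Set.range (Fam p γ)) := by
      have : c • monomial (E a b) (1:ℝ) = Fam p γ q - g := by rw [hg]; ring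
      rw [this]
      exact Submodule.sub_mem _ hFmem hgmem
    have := Submodule.smul_mem _ c⁻¹ hsm
    rwa [smul_smul, inv_mul_cancel₀ hcne, one_smul] at this

lemma span_Fam (hγ : ∀ n m, 0 < γ n m) (hp : 0 < p) :
    Submodule.span ℝ (Set.range (Fam p γ)) = restrictTotalDegree (Fin 2) ℝ (p - 1) := by
  refine le_antisymm ?_ ?_
  · rw [Submodule.span_le]
    rintro _ ⟨q, rfl⟩
    rw [SetLike.mem_coe, mem_restrictTotalDegree]
    have := totalDegree_Kpoly_le (γ q.1.1 q.1.2) q.1.1 q.1.2 q.2.1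
    have := q.2.2
    simp only [Fam]
    omega
  · intro f hf
    rw [mem_restrictTotalDegree] at hf
    rw [as_sum f]
    refine Submodule.sum_mem _ fun d hd => ?_
    have h1 := le_totalDegree hd
    have h2 : (d.sum fun _ e => e) = d 0 + d 1 := by
      rw [Finsupp.sum_fintype _ _ (fun _ => rfl), Fin.sum_univ_two]
    have hab : d 0 + d 1 < p := by omega
    have hmem := mono_mem p γ hγ hp ((d 0 + d 1)*p + d 0) (d 0) (d 1) le_rfl hab
    have hrepr : monomial d (coeff d f) = (coeff d f) • monomial (E (d 0) (d 1)) (1:ℝ) := by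
      rw [smul_monomial, smul_eq_mul, mul_one, ← eq_E d]
    rw [hrepr]
    exact Submodule.smul_mem _ _ hmem

lemma linIndep_Fam (hγ : ∀ n m, 0 < γ n m) (hp : 0 < p) : LinearIndependent ℝ (Fam p γ) := by
  rw [linearIndependent_iff]
  intro l hl
  by_contra hne
  obtain ⟨q0, hq0mem, hq0max⟩ := Finset.exists_max_image l.support
    (fun q => q.1.1 * p + q.1.2) (Finsupp.support_nonempty_iff.mpr hne)
  have hm0 : q0.1.2 ≤ q0.1.1 := q0.2.1
  have hn0p : q0.1.1 < p := q0.2.2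
  set n0 := q0.1.1 with hn0def
  set m0 := q0.1.2 with hm0def
  have hcoeff : coeff (E m0 (n0 - m0)) (Finsupp.linearCombination ℝ (Fam p γ) l) = 0 := by
    rw [hl]
    simp
  rw [Finsupp.linearCombination_apply, Finsupp.sum, coeff_sum] at hcoeff
  have hterms : ∀ q ∈ l.support, q ≠ q0 →
      coeff (E m0 (n0 - m0)) (l q • Fam p γ q) = 0 := by
    intro q hq hqne
    rw [coeff_smul, smul_eq_mul]
    by_contra hterm
    have hcne : coeff (E m0 (n0-m0)) (Fam p γ q) ≠ 0 :=
      fun h => hterm (by rw [h, mul_zero])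
    obtain ⟨h1, h2⟩ := support_Kpoly _ _ _ q.2.1 _ hcne
    rw [E_apply0] at h1
    rw [E_apply0, E_apply1] at h2
    have hmax := hq0max q hq
    have hn0le : n0 ≤ q.1.1 := by omega
    have hq2p : q.1.2 < p := by have := q.2.1; have := q.2.2; omega
    have heqn : q.1.1 = n0 := by
      by_contra hneq
      have hlt : n0 + 1 ≤ q.1.1 := by omega
      have h3 : (n0+1) * p ≤ q.1.1 * p := Nat.mul_le_mul_right p hlt
      rw [Nat.succ_mul] at h3
      omega
    have heqm : q.1.2 = m0 := by rw [heqn] at hmax; omega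
    exact hqne (Subtype.ext (Prod.ext heqn heqm))
  rw [Finset.sum_eq_single_of_mem q0 hq0mem hterms] at hcoeff
  rw [coeff_smul, smul_eq_mul] at hcoeff
  have hK : coeff (E m0 (n0 - m0)) (Fam p γ q0) ≠ 0 :=
    coeff_Kpoly_top_ne (γ n0 m0) (ne_of_gt (hγ n0 m0)) n0 m0
  have : l q0 = 0 := by
    rcases mul_eq_zero.mp hcoeff with h | h
    · exact h
    · exact absurd h hK
  exact (Finsupp.mem_support_iff.mp hq0mem) this

noncomputable def cardEquiv : {q : ℕ × ℕ // q.2 ≤ q.1 ∧ q.1 < p} ≃ (Σ n : Fin p, Fin (n.1+1)) where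
  toFun := fun q => ⟨⟨q.1.1, q.2.2⟩, ⟨q.1.2, Nat.lt_succ_of_le q.2.1⟩⟩
  invFun := fun x => ⟨(x.1.1, x.2.1), ⟨Nat.lt_succ_iff.mp x.2.2, x.1.2⟩⟩
  left_inv := fun q => rfl
  right_inv := fun x => rfl

lemma card_S : Nat.card {q : ℕ × ℕ // q.2 ≤ q.1 ∧ q.1 < p} = p * (p + 1) / 2 := by
  rw [Nat.card_congr (cardEquiv p), Nat.card_eq_fintype_card, Fintype.card_sigma]
  have h1 : ∑ n : Fin p, Fintype.card (Fin (n.1+1)) = ∑ i ∈ Finset.range p, (i+1) := by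
    simp only [Fintype.card_fin]
    exact Fin.sum_univ_eq_sum_range (fun i => i+1) p
  have h4 : ∑ i ∈ Finset.range p, (i+1) = (∑ i ∈ Finset.range p, i) + p := by
    rw [Finset.sum_add_distrib, Finset.sum_const, Finset.card_range, smul_eq_mul, mul_one]
  rw [h1, h4]
  have h5 := Finset.sum_range_id_mul_two (p+1)
  rw [Finset.sum_range_succ, Nat.add_sub_cancel] at h5
  refine (Nat.div_eq_of_eq_mul_left (by norm_num) ?_).symm
  rw [h5]
  ring

end Basis


/-- Each Koornwinder function `K_{nm}` (`m ≤ n`) agrees with a genuine polynomial in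
`(ξ,η)` of total degree exactly `n`; the `p(p+1)/2` functions with `m ≤ n < p` form a
basis (linearly independent and spanning) of the space of bivariate polynomials of total
degree less than `p`. -/
theorem koornwinder_polynomial_basis
    (p : ℕ) (hp : 0 < p) (γ : ℕ → ℕ → ℝ) (hγ : ∀ n m, 0 < γ n m) :
    ∃ P : ℕ → ℕ → MvPolynomial (Fin 2) ℝ,
      (∀ n m, m ≤ n →
        ((∀ ξ η : ℝ, η ≠ 1 →
            MvPolynomial.eval ![ξ, η] (P n m) = koornwinder (γ n m) n m ξ η)
          ∧ (P n m).totalDegree = n))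
      ∧ LinearIndependent ℝ
          (fun q : {q : ℕ × ℕ // q.2 ≤ q.1 ∧ q.1 < p} => P q.1.1 q.1.2)
      ∧ Submodule.span ℝ
            (Set.range fun q : {q : ℕ × ℕ // q.2 ≤ q.1 ∧ q.1 < p} => P q.1.1 q.1.2)
          = MvPolynomial.restrictTotalDegree (Fin 2) ℝ (p - 1)
      ∧ Nat.card {q : ℕ × ℕ // q.2 ≤ q.1 ∧ q.1 < p} = p * (p + 1) / 2 := by
  refine ⟨fun n m => Kpoly (γ n m) n m, ?_, ?_, ?_, ?_⟩
  · intro n m hm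
    exact ⟨fun ξ η hη => eval_Kpoly (γ n m) n m ξ η hη,
           totalDegree_Kpoly (γ n m) (ne_of_gt (hγ n m)) n m hm⟩
  · exact linIndep_Fam p γ hγ hp
  · exact span_Fam p γ hγ hp
  · exact card_S p
end
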